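/- Lower bound on postselected swap fidelity: for ρ₁, ρ₂ ∈ S_{p,F}, the postselected fidelity after Bell outcome 00 satisfies F'₀₀(ρ₁⊗ρ₂) ≥ p(2F−p)/(1 + (1−p)²). More generally, for ρ_k ∈ S_{p_k,F_k}: F'₀₀ ≥ (p₁F₂ + p₂F₁ − p₁p₂)/(1 + (1−p₁)(1−p₂)). -/

import Mathlib

open Matrix Kronecker BigOperators ComplexOrder

noncomputable section

/-- Pauli X matrix. -/
def PX : Matrix (Fin 2) (Fin 2) ℂ := !![0, 1; 1, 0]

/-- Pauli Y matrix. -/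
def PY : Matrix (Fin 2) (Fin 2) ℂ := !![0, -Complex.I; Complex.I, 0]

/-- Pauli Z matrix. -/
def PZ : Matrix (Fin 2) (Fin 2) ℂ := !![1, 0; 0, -1]

/-- The maximally entangled two-qubit state (|00⟩+|11⟩)/√2, as a vector. -/
def bell00 : Fin 2 × Fin 2 → ℂ := fun p => if p.1 = p.2 then ((1 / Real.sqrt 2 : ℝ) : ℂ) else 0

/-- The Bell basis vector |Ψ_ij⟩ = (I ⊗ X^i Z^j)|Ψ₀₀⟩. -/
def bell (i j : Fin 2) : Fin 2 × Fin 2 → ℂ :=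
  (((1 : Matrix (Fin 2) (Fin 2) ℂ) ⊗ₖ (PX ^ (i : ℕ) * PZ ^ (j : ℕ)))).mulVec bell00

/-- The inner product ⟨φ|M|ψ⟩. -/
def braket2 {n : Type*} [Fintype n] (φ : n → ℂ) (M : Matrix n n ℂ) (ψ : n → ℂ) : ℂ :=
  star φ ⬝ᵥ M.mulVec ψ

/-- A density matrix: positive semidefinite with unit trace. -/
def IsDensity {n : Type*} [Fintype n] (ρ : Matrix n n ℂ) : Prop :=
  ρ.PosSemidef ∧ ρ.trace = 1

/-- The Bell-diagonal twirl B(ρ). -/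
def twirl (ρ : Matrix (Fin 2 × Fin 2) (Fin 2 × Fin 2) ℂ) :
    Matrix (Fin 2 × Fin 2) (Fin 2 × Fin 2) ℂ :=
  (1 / 4 : ℂ) • (ρ + (PX ⊗ₖ PX) * ρ * (PX ⊗ₖ PX)ᴴ + (PY ⊗ₖ PY) * ρ * (PY ⊗ₖ PY)ᴴ
    + (PZ ⊗ₖ PZ) * ρ * (PZ ⊗ₖ PZ)ᴴ)

/-- The Bell projector |Ψ_ij⟩⟨Ψ_ij|. -/
def bproj (i j : Fin 2) : Matrix (Fin 2 × Fin 2) (Fin 2 × Fin 2) ℂ :=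
  vecMulVec (bell i j) (star (bell i j))

/-- Partial inner product ⟨ψ|_{A₁A₂} M |ψ⟩_{A₁A₂} of a vector ψ on the middle registers
A₁,A₂ with an operator M on registers (B₁,A₁),(A₂,B₂), giving a matrix on B₁,B₂. -/
def swapProj (ψ : Fin 2 × Fin 2 → ℂ)
    (M : Matrix ((Fin 2 × Fin 2) × (Fin 2 × Fin 2)) ((Fin 2 × Fin 2) × (Fin 2 × Fin 2)) ℂ) :
    Matrix (Fin 2 × Fin 2) (Fin 2 × Fin 2) ℂ :=
  fun p q => ∑ a₁, ∑ a₂, ∑ a₁', ∑ a₂',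
    star (ψ (a₁, a₂)) * M ((p.1, a₁), (a₂, p.2)) ((q.1, a₁'), (a₂', q.2)) * ψ (a₁', a₂')

/-- The probability of Bell-measurement outcome ij on the middle registers:
p'_ij(M) = Tr[|Ψ_ij⟩⟨Ψ_ij|_{A₁A₂} M]. -/
def swapProb (i j : Fin 2)
    (M : Matrix ((Fin 2 × Fin 2) × (Fin 2 × Fin 2)) ((Fin 2 × Fin 2) × (Fin 2 × Fin 2)) ℂ) : ℂ :=
  (swapProj (bell i j) M).trace

/-- Tr[|Ψ_ij⟩⟨Ψ_ij|_{B₁B₂} |Ψ_ij⟩⟨Ψ_ij|_{A₁A₂} M]. -/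
def swapNum (i j : Fin 2)
    (M : Matrix ((Fin 2 × Fin 2) × (Fin 2 × Fin 2)) ((Fin 2 × Fin 2) × (Fin 2 × Fin 2)) ℂ) : ℂ :=
  braket2 (bell i j) (swapProj (bell i j) M) (bell i j)

/-- The postselected end-to-end fidelity F'_ij. -/
def swapFid (i j : Fin 2)
    (M : Matrix ((Fin 2 × Fin 2) × (Fin 2 × Fin 2)) ((Fin 2 × Fin 2) × (Fin 2 × Fin 2)) ℂ) : ℂ :=
  swapNum i j M / swapProb i j M

/-- The family S_{p,F}: two-qubit states of the form p|Ψ₀₀⟩⟨Ψ₀₀| + (1−p)σ for some density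
matrix σ, with fidelity ⟨Ψ₀₀|ρ|Ψ₀₀⟩ = F. -/
def Spf (p F : ℝ) : Set (Matrix (Fin 2 × Fin 2) (Fin 2 × Fin 2) ℂ) :=
  {ρ | (∃ σ : Matrix (Fin 2 × Fin 2) (Fin 2 × Fin 2) ℂ, IsDensity σ ∧
      ρ = (p : ℂ) • bproj 0 0 + ((1 - p : ℝ) : ℂ) • σ) ∧
    braket2 (bell 0 0) ρ (bell 0 0) = (F : ℂ)}

/-!
Write `ρₖ = pₖ Φ + (1 - pₖ) σₖ` with `Φ = |Ψ₀₀⟩⟨Ψ₀₀|`. The postselected output `swapProj` is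
bilinear in the two input pairs, and swapping against a perfect Bell pair is teleportation: the
outcome-`00` branch of `Φ ⊗ σ` and of `σ ⊗ Φ` is `σ / 4`. With `q = (1 - p₁)(1 - p₂)` the numerator
of `F'₀₀` is therefore `(p₁F₂ + p₂F₁ - p₁p₂)/4 + q n` and the outcome probability is
`(1 - q)/4 + q t`, where `n ≥ 0` and `t` belong to the noise `σ₁ ⊗ σ₂`. The middle registers of
`σ₁ ⊗ σ₂` are in the product state `τ₁ ⊗ τ₂` of two reduced states, whose overlap with `Ψ₀₀` is
`Tr(τ₁ τ₂ᵀ)/2 ≤ Tr τ₁ Tr τ₂ / 2 = 1/2`; so `t ≤ 1/2` and the ratio is at least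
`(p₁F₂ + p₂F₁ - p₁p₂)/(1 + q)`.
-/

namespace Matrix

section TraceInequality

variable {n 𝕜 : Type*} [RCLike 𝕜]

open scoped MatrixOrder in
theorem PosSemidef.trace_mul_nonneg [Fintype n] [DecidableEq n] {A B : Matrix n n 𝕜}
    (hA : A.PosSemidef) (hB : B.PosSemidef) : 0 ≤ (A * B).trace := by
  obtain ⟨X, rfl⟩ := CStarAlgebra.nonneg_iff_eq_star_mul_self.mp hA.nonneg
  rw [star_eq_conjTranspose, mul_assoc, trace_mul_comm]
  exact (hB.mul_mul_conjTranspose_same X).trace_nonneg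

variable (n 𝕜) in
def swapOperator [DecidableEq n] : Matrix (n × n) (n × n) 𝕜 :=
  (1 : Matrix (n × n) (n × n) 𝕜).submatrix id Prod.swap

theorem conjTranspose_swapOperator [DecidableEq n] : (swapOperator n 𝕜)ᴴ = swapOperator n 𝕜 := by
  ext x y
  simp [swapOperator, one_apply, Prod.ext_iff, eq_comm, and_comm]

variable [Fintype n] [DecidableEq n]

theorem swapOperator_mul_self : swapOperator n 𝕜 * swapOperator n 𝕜 = 1 := by
  ext x y
  simp [swapOperator, mul_apply, one_apply]

theorem trace_kronecker_mul_swapOperator (A B : Matrix n n 𝕜) :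
    (A ⊗ₖ B * swapOperator n 𝕜).trace = (A * B).trace := by
  simp [swapOperator, trace, mul_apply, one_apply, Fintype.sum_prod_type, Prod.ext_iff, ite_and]

-- `1 - swap` is twice the projection onto the antisymmetric subspace.
theorem posSemidef_one_sub_swapOperator : (1 - swapOperator n 𝕜).PosSemidef := by
  have h : 1 - swapOperator n 𝕜 =
      (1 / 2 : ℝ) • ((1 - swapOperator n 𝕜)ᴴ * (1 - swapOperator n 𝕜)) := by
    rw [conjTranspose_sub, conjTranspose_one, conjTranspose_swapOperator, sub_mul, mul_sub,
      mul_sub, swapOperator_mul_self, one_mul, mul_one, one_mul]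
    module
  rw [h]
  exact (posSemidef_conjTranspose_mul_self _).smul (by positivity)

theorem PosSemidef.trace_mul_le {A B : Matrix n n 𝕜} (hA : A.PosSemidef) (hB : B.PosSemidef) :
    (A * B).trace ≤ A.trace * B.trace := by
  have := (hA.kronecker hB).trace_mul_nonneg (posSemidef_one_sub_swapOperator (n := n) (𝕜 := 𝕜))
  rwa [mul_sub, mul_one, trace_sub, trace_kronecker_mul_swapOperator, trace_kronecker,
    sub_nonneg] at this

end TraceInequality

section PartialTrace

variable {m n R : Type*} [AddCommMonoid R]

def partialTraceFst [Fintype m] (M : Matrix (m × n) (m × n) R) : Matrix n n R :=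
  of fun j j' ↦ ∑ i, M (i, j) (i, j')

def partialTraceSnd [Fintype n] (M : Matrix (m × n) (m × n) R) : Matrix m m R :=
  of fun i i' ↦ ∑ j, M (i, j) (i', j)

theorem partialTraceFst_eq_sum_submatrix [Fintype m] (M : Matrix (m × n) (m × n) R) :
    M.partialTraceFst = ∑ i, M.submatrix (Prod.mk i) (Prod.mk i) := by
  ext; simp [partialTraceFst, sum_apply]

theorem partialTraceSnd_eq_sum_submatrix [Fintype n] (M : Matrix (m × n) (m × n) R) :
    M.partialTraceSnd = ∑ j, M.submatrix (·, j) (·, j) := by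
  ext; simp [partialTraceSnd, sum_apply]

variable [Fintype m] [Fintype n]

theorem trace_partialTraceFst (M : Matrix (m × n) (m × n) R) :
    M.partialTraceFst.trace = M.trace := by
  simp [partialTraceFst, trace, Fintype.sum_prod_type, Finset.sum_comm (γ := m)]

theorem trace_partialTraceSnd (M : Matrix (m × n) (m × n) R) :
    M.partialTraceSnd.trace = M.trace := by
  simp [partialTraceSnd, trace, Fintype.sum_prod_type]

end PartialTrace

namespace PosSemidef

variable {m n R : Type*} [Ring R] [PartialOrder R] [StarRing R] [AddLeftMono R]
  {M : Matrix (m × n) (m × n) R}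

theorem partialTraceFst [Fintype m] (hM : M.PosSemidef) : M.partialTraceFst.PosSemidef :=
  M.partialTraceFst_eq_sum_submatrix ▸ posSemidef_sum _ fun _ _ ↦ hM.submatrix _

theorem partialTraceSnd [Fintype n] (hM : M.PosSemidef) : M.partialTraceSnd.PosSemidef :=
  M.partialTraceSnd_eq_sum_submatrix ▸ posSemidef_sum _ fun _ _ ↦ hM.submatrix _

end PosSemidef

end Matrix

theorem braket2_add {n : Type*} [Fintype n] (φ ψ : n → ℂ) (M N : Matrix n n ℂ) :
    braket2 φ (M + N) ψ = braket2 φ M ψ + braket2 φ N ψ := by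
  simp [braket2, add_mulVec, dotProduct_add]

theorem braket2_smul {n : Type*} [Fintype n] (φ ψ : n → ℂ) (c : ℂ) (M : Matrix n n ℂ) :
    braket2 φ (c • M) ψ = c * braket2 φ M ψ := by
  simp [braket2, smul_mulVec, dotProduct_smul]

theorem ofReal_inv_sqrt_two_mul_self : ((√2 : ℝ) : ℂ)⁻¹ * ((√2 : ℝ) : ℂ)⁻¹ = 1 / 2 := by
  rw [← mul_inv, ← Complex.ofReal_mul, Real.mul_self_sqrt zero_le_two]
  norm_num

theorem bell00_apply (x : Fin 2 × Fin 2) :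
    bell00 x = if x.1 = x.2 then ((√2 : ℝ) : ℂ)⁻¹ else 0 := by
  simp [bell00]

theorem bell_zero_zero : bell 0 0 = bell00 := by
  simp [bell, PX, PZ, one_mulVec]

theorem bproj_zero_zero_apply (x y : Fin 2 × Fin 2) :
    bproj 0 0 x y = if x.1 = x.2 ∧ y.1 = y.2 then 1 / 2 else 0 := by
  rw [bproj, bell_zero_zero, vecMulVec_apply, Pi.star_apply, bell00_apply, bell00_apply]
  split_ifs <;> simp_all [ofReal_inv_sqrt_two_mul_self]

theorem trace_bproj_zero_zero : (bproj 0 0).trace = 1 := by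
  simp [trace, bproj_zero_zero_apply, Fintype.sum_prod_type]

theorem braket2_bproj_zero_zero : braket2 (bell 0 0) (bproj 0 0) (bell 0 0) = 1 := by
  simp [bell_zero_zero, braket2, bproj_zero_zero_apply, bell00_apply, dotProduct, mulVec,
    Fintype.sum_prod_type]
  rw [ofReal_inv_sqrt_two_mul_self]
  norm_num

theorem braket2_bell00_kronecker (X Y : Matrix (Fin 2) (Fin 2) ℂ) :
    braket2 bell00 (X ⊗ₖ Y) bell00 = (X * Yᵀ).trace / 2 := by
  simp [braket2, bell00, dotProduct, mulVec, Fintype.sum_prod_type, trace, mul_apply,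
    Fin.sum_univ_two]
  linear_combination (X 0 0 * Y 0 0 + X 0 1 * Y 0 1 + X 1 0 * Y 1 0 + X 1 1 * Y 1 1) *
    ofReal_inv_sqrt_two_mul_self

section swapProj

variable (ψ : Fin 2 × Fin 2 → ℂ)
  (M N : Matrix ((Fin 2 × Fin 2) × (Fin 2 × Fin 2)) ((Fin 2 × Fin 2) × (Fin 2 × Fin 2)) ℂ)

theorem swapProj_add : swapProj ψ (M + N) = swapProj ψ M + swapProj ψ N := by
  ext p q
  simp only [swapProj, Matrix.add_apply, mul_add, add_mul, Finset.sum_add_distrib]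

theorem swapProj_smul (c : ℂ) : swapProj ψ (c • M) = c • swapProj ψ M := by
  ext p q
  simp only [swapProj, Matrix.smul_apply, smul_eq_mul, Finset.mul_sum, mul_assoc, mul_left_comm c]

theorem conjTranspose_swapProj : (swapProj ψ M)ᴴ = swapProj ψ Mᴴ := by
  ext p q
  simp [swapProj, Fin.sum_univ_two]
  ring

theorem braket2_swapProj (φ : Fin 2 × Fin 2 → ℂ) :
    braket2 φ (swapProj ψ M) φ =
      braket2 (fun x ↦ φ (x.1.1, x.2.2) * ψ (x.1.2, x.2.1)) M
        (fun x ↦ φ (x.1.1, x.2.2) * ψ (x.1.2, x.2.1)) := by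
  simp [braket2, swapProj, dotProduct, mulVec, Fintype.sum_prod_type, Fin.sum_univ_two]
  ring

variable {M} in
theorem posSemidef_swapProj (hM : M.PosSemidef) : (swapProj ψ M).PosSemidef :=
  .of_dotProduct_mulVec_nonneg (by rw [IsHermitian, conjTranspose_swapProj, hM.isHermitian.eq])
    fun φ ↦ show 0 ≤ braket2 φ (swapProj ψ M) φ from
      braket2_swapProj ψ M φ ▸ hM.dotProduct_mulVec_nonneg _

theorem trace_swapProj_kronecker (A B : Matrix (Fin 2 × Fin 2) (Fin 2 × Fin 2) ℂ) :
    (swapProj ψ (A ⊗ₖ B)).trace = braket2 ψ (A.partialTraceFst ⊗ₖ B.partialTraceSnd) ψ := by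
  simp [swapProj, trace, braket2, dotProduct, mulVec, partialTraceFst, partialTraceSnd,
    Fintype.sum_prod_type]
  ring

theorem swapProj_bell00_apply (p q : Fin 2 × Fin 2) :
    swapProj bell00 M p q = (∑ a, ∑ a', M ((p.1, a), (a, p.2)) ((q.1, a'), (a', q.2))) / 2 := by
  simp [swapProj, bell00_apply, Fin.sum_univ_two]
  linear_combination (M ((p.1, 0), (0, p.2)) ((q.1, 0), (0, q.2)) +
    M ((p.1, 0), (0, p.2)) ((q.1, 1), (1, q.2)) + M ((p.1, 1), (1, p.2)) ((q.1, 0), (0, q.2)) +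
    M ((p.1, 1), (1, p.2)) ((q.1, 1), (1, q.2))) * ofReal_inv_sqrt_two_mul_self

end swapProj

section Teleportation

variable (σ σ₁ σ₂ : Matrix (Fin 2 × Fin 2) (Fin 2 × Fin 2) ℂ)

theorem swapProj_bproj_kronecker :
    swapProj (bell 0 0) (bproj 0 0 ⊗ₖ σ) = (1 / 4 : ℂ) • σ := by
  ext p q
  simp [bell_zero_zero, swapProj_bell00_apply, bproj_zero_zero_apply, ite_and]
  ring

theorem swapProj_kronecker_bproj :
    swapProj (bell 0 0) (σ ⊗ₖ bproj 0 0) = (1 / 4 : ℂ) • σ := by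
  ext p q
  simp [bell_zero_zero, swapProj_bell00_apply, bproj_zero_zero_apply, ite_and]
  ring

variable (p₁ q₁ p₂ q₂ : ℂ)

theorem swapProj_mix_kronecker_mix :
    swapProj (bell 0 0) ((p₁ • bproj 0 0 + q₁ • σ₁) ⊗ₖ (p₂ • bproj 0 0 + q₂ • σ₂)) =
      (p₁ * p₂ / 4) • bproj 0 0 + (p₁ * q₂ / 4) • σ₂ + (q₁ * p₂ / 4) • σ₁ +
        (q₁ * q₂) • swapProj (bell 0 0) (σ₁ ⊗ₖ σ₂) := by
  simp only [add_kronecker, kronecker_add, smul_kronecker, kronecker_smul, swapProj_add,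
    swapProj_smul, swapProj_bproj_kronecker, swapProj_kronecker_bproj, smul_smul]
  module

theorem swapNum_mix_kronecker_mix :
    swapNum 0 0 ((p₁ • bproj 0 0 + q₁ • σ₁) ⊗ₖ (p₂ • bproj 0 0 + q₂ • σ₂)) =
      p₁ * p₂ / 4 + p₁ * q₂ / 4 * braket2 (bell 0 0) σ₂ (bell 0 0) +
        q₁ * p₂ / 4 * braket2 (bell 0 0) σ₁ (bell 0 0) + q₁ * q₂ * swapNum 0 0 (σ₁ ⊗ₖ σ₂) := by
  rw [swapNum, swapProj_mix_kronecker_mix]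
  simp only [braket2_add, braket2_smul, braket2_bproj_zero_zero, swapNum, mul_one]

theorem swapProb_mix_kronecker_mix :
    swapProb 0 0 ((p₁ • bproj 0 0 + q₁ • σ₁) ⊗ₖ (p₂ • bproj 0 0 + q₂ • σ₂)) =
      p₁ * p₂ / 4 + p₁ * q₂ / 4 * σ₂.trace + q₁ * p₂ / 4 * σ₁.trace +
        q₁ * q₂ * swapProb 0 0 (σ₁ ⊗ₖ σ₂) := by
  rw [swapProb, swapProj_mix_kronecker_mix]
  simp only [trace_add, trace_smul, trace_bproj_zero_zero, swapProb, smul_eq_mul, mul_one]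

end Teleportation

theorem swapProb_kronecker_le_half {σ₁ σ₂ : Matrix (Fin 2 × Fin 2) (Fin 2 × Fin 2) ℂ}
    (h₁ : IsDensity σ₁) (h₂ : IsDensity σ₂) : swapProb 0 0 (σ₁ ⊗ₖ σ₂) ≤ 1 / 2 := by
  have h := h₁.1.partialTraceFst.trace_mul_le h₂.1.partialTraceSnd.transpose
  rw [trace_transpose, trace_partialTraceFst, trace_partialTraceSnd, h₁.2, h₂.2, one_mul] at h
  rw [swapProb, trace_swapProj_kronecker, bell_zero_zero, braket2_bell00_kronecker]
  gcongr

theorem div_le_postselected_ratio {a q n t : ℝ} (ha : 0 ≤ a) (haq : a ≤ 1 - q) (hq : 0 ≤ q)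
    (hn : 0 ≤ n) (ht : 0 ≤ t) (ht' : t ≤ 1 / 2) :
    a / (1 + q) ≤ (a / 4 + q * n) / ((1 - q) / 4 + q * t) := by
  rcases (show 0 ≤ (1 - q) / 4 + q * t by nlinarith).eq_or_lt with hD | hD
  · have ha0 : a = 0 := by nlinarith
    rw [ha0, ← hD, div_zero, zero_div]
  · calc a / (1 + q) = (a / 4) / ((1 + q) / 4) := by field_simp
      _ ≤ _ := div_le_div₀ (by positivity) (by nlinarith) hD (by nlinarith)

theorem exists_swapNum_swapProb_of_mem_Spf {p₁ F₁ p₂ F₂ : ℝ}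
    {ρ₁ ρ₂ : Matrix (Fin 2 × Fin 2) (Fin 2 × Fin 2) ℂ}
    (hρ₁ : ρ₁ ∈ Spf p₁ F₁) (hρ₂ : ρ₂ ∈ Spf p₂ F₂) :
    ∃ n t : ℝ, 0 ≤ n ∧ 0 ≤ t ∧ t ≤ 1 / 2 ∧
      swapNum 0 0 (ρ₁ ⊗ₖ ρ₂) =
        (((p₁ * F₂ + p₂ * F₁ - p₁ * p₂) / 4 + (1 - p₁) * (1 - p₂) * n : ℝ) : ℂ) ∧
      swapProb 0 0 (ρ₁ ⊗ₖ ρ₂) =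
        (((1 - (1 - p₁) * (1 - p₂)) / 4 + (1 - p₁) * (1 - p₂) * t : ℝ) : ℂ) := by
  obtain ⟨⟨σ₁, hσ₁, rfl⟩, hfid₁⟩ := hρ₁
  obtain ⟨⟨σ₂, hσ₂, rfl⟩, hfid₂⟩ := hρ₂
  rw [braket2_add, braket2_smul, braket2_smul, braket2_bproj_zero_zero] at hfid₁ hfid₂
  have hS := posSemidef_swapProj (bell 0 0) (hσ₁.1.kronecker hσ₂.1)
  obtain ⟨n, hn, hSn⟩ : ∃ n : ℝ, 0 ≤ n ∧ (n : ℂ) = swapNum 0 0 (σ₁ ⊗ₖ σ₂) :=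
    RCLike.nonneg_iff_exists_ofReal.mp (hS.dotProduct_mulVec_nonneg _)
  obtain ⟨t, ht, hSt⟩ : ∃ t : ℝ, 0 ≤ t ∧ (t : ℂ) = swapProb 0 0 (σ₁ ⊗ₖ σ₂) :=
    RCLike.nonneg_iff_exists_ofReal.mp hS.trace_nonneg
  refine ⟨n, t, hn, ht, ?_, ?_, ?_⟩
  · rw [← Complex.real_le_real, hSt]
    simpa using swapProb_kronecker_le_half hσ₁ hσ₂
  · rw [swapNum_mix_kronecker_mix, ← hSn]
    push_cast at hfid₁ hfid₂ ⊢
    linear_combination (p₁ / 4 : ℂ) * hfid₂ + (p₂ / 4 : ℂ) * hfid₁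
  · rw [swapProb_mix_kronecker_mix, ← hSt, hσ₁.2, hσ₂.2]
    push_cast
    ring

/-- Lower bound on the postselected swap fidelity: for ρ_k ∈ S_{p_k,F_k},
F'₀₀(ρ₁⊗ρ₂) ≥ (p₁F₂ + p₂F₁ − p₁p₂)/(1 + (1−p₁)(1−p₂)); in particular for
ρ₁, ρ₂ ∈ S_{p,F}, F'₀₀ ≥ p(2F−p)/(1 + (1−p)²). -/
theorem swap_fidelity_lower_bound (p₁ F₁ p₂ F₂ : ℝ)
    (hp₁ : 0 ≤ p₁) (hpF₁ : p₁ ≤ F₁) (hF₁ : F₁ ≤ 1)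
    (hp₂ : 0 ≤ p₂) (hpF₂ : p₂ ≤ F₂) (hF₂ : F₂ ≤ 1)
    (ρ₁ ρ₂ : Matrix (Fin 2 × Fin 2) (Fin 2 × Fin 2) ℂ)
    (hρ₁ : ρ₁ ∈ Spf p₁ F₁) (hρ₂ : ρ₂ ∈ Spf p₂ F₂) :
    (p₁ * F₂ + p₂ * F₁ - p₁ * p₂) / (1 + (1 - p₁) * (1 - p₂)) ≤
      (swapFid 0 0 (ρ₁ ⊗ₖ ρ₂)).re ∧
    (p₁ = p₂ → F₁ = F₂ →
      p₁ * (2 * F₁ - p₁) / (1 + (1 - p₁) ^ 2) ≤ (swapFid 0 0 (ρ₁ ⊗ₖ ρ₂)).re) := by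
  obtain ⟨n, t, hn, ht, ht', hnum, hprob⟩ := exists_swapNum_swapProb_of_mem_Spf hρ₁ hρ₂
  rw [swapFid, hnum, hprob, ← Complex.ofReal_div, Complex.ofReal_re]
  have key := div_le_postselected_ratio (a := p₁ * F₂ + p₂ * F₁ - p₁ * p₂)
    (q := (1 - p₁) * (1 - p₂)) (by nlinarith) (by nlinarith)
    (mul_nonneg (by linarith) (by linarith)) hn ht ht'
  exact ⟨key, by rintro rfl rfl; convert key using 2 <;> ring⟩
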